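/- arXiv:1504.02991 — 2 statements merged into one kernel-verified Lean document; each statement's English description precedes it below -/
import Mathlib

section
/- The Choi map φ on 3×3 matrices, defined by φ([[a_ij]]) = (1/2) · [[a11+a33, −a12, −a13], [−a21, a22+a11, −a23], [−a31, −a32, a33+a22]], is a positive map: it sends positive semidefinite matrices to positive semidefinite matrices. -/
open Matrix
open scoped ComplexOrder

/-- The Choi map `φ` on 3×3 complex matrices. -/
noncomputable def choiPhi (a : Matrix (Fin 3) (Fin 3) ℂ) : Matrix (Fin 3) (Fin 3) ℂ :=
  (1 / 2 : ℂ) •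
    !![a 0 0 + a 2 2, -a 0 1, -a 0 2;
       -a 1 0, a 1 1 + a 0 0, -a 1 2;
       -a 2 0, -a 2 1, a 2 2 + a 1 1]

/-!
Write `A = Bᴴ * B`. For `wᵢ(x) = 2|xᵢ|² + |xᵢ₊₁|²` one has
`x* φ(A) x = ½ (∑ᵢ wᵢ(x) Aᵢᵢ - x* A x)`, and `x* A x = ∑ₖ |bₖ ⬝ x|²` over the rows `bₖ` of `B`.
So it suffices that `|b ⬝ x|² ≤ ∑ᵢ wᵢ(x) |bᵢ|²` for every `b`, which after the triangle inequality
is an elementary inequality between six nonnegative reals.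
-/

/-- The index `i + 1` is taken modulo 3. -/
noncomputable def choiWeight (x : Fin 3 → ℂ) (i : Fin 3) : ℝ := 2 * ‖x i‖ ^ 2 + ‖x (i + 1)‖ ^ 2

lemma sq_sum_three_mul_le_cyclic (p₀ p₁ p₂ q₀ q₁ q₂ : ℝ) :
    (p₀ * q₀ + p₁ * q₁ + p₂ * q₂) ^ 2 ≤
      (2 * p₀ ^ 2 + p₁ ^ 2) * q₀ ^ 2 + (2 * p₁ ^ 2 + p₂ ^ 2) * q₁ ^ 2
        + (2 * p₂ ^ 2 + p₀ ^ 2) * q₂ ^ 2 := by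
  nlinarith [sq_nonneg (p₀ * q₀ - p₁ * q₁), sq_nonneg (p₁ * q₁ - p₂ * q₂),
    sq_nonneg (p₀ * q₀ - p₂ * q₂), sq_nonneg (p₁ * q₀ - p₀ * q₁), sq_nonneg (p₂ * q₁ - p₁ * q₂),
    sq_nonneg (p₀ * q₂ - p₂ * q₀)]

lemma norm_dotProduct_sq_le_sum_choiWeight (b x : Fin 3 → ℂ) :
    ‖b ⬝ᵥ x‖ ^ 2 ≤ ∑ i, choiWeight x i * ‖b i‖ ^ 2 := by
  have htri : ‖b ⬝ᵥ x‖ ≤ ‖x 0‖ * ‖b 0‖ + ‖x 1‖ * ‖b 1‖ + ‖x 2‖ * ‖b 2‖ := by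
    simpa [dotProduct, Fin.sum_univ_three, norm_mul, mul_comm] using
      norm_sum_le Finset.univ fun i => b i * x i
  calc ‖b ⬝ᵥ x‖ ^ 2 ≤ (‖x 0‖ * ‖b 0‖ + ‖x 1‖ * ‖b 1‖ + ‖x 2‖ * ‖b 2‖) ^ 2 := by gcongr
    _ ≤ _ := sq_sum_three_mul_le_cyclic ..
    _ = ∑ i, choiWeight x i * ‖b i‖ ^ 2 := by simp [choiWeight, Fin.sum_univ_three]

lemma isHermitian_choiPhi {A : Matrix (Fin 3) (Fin 3) ℂ} (hA : A.IsHermitian) :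
    (choiPhi A).IsHermitian := by
  have hA' : ∀ i j, star (A i j) = A j i := fun i j => by rw [← conjTranspose_apply, hA.eq]
  ext i j
  fin_cases i <;> fin_cases j <;> simp [choiPhi, hA']

lemma dotProduct_choiPhi_mulVec (A : Matrix (Fin 3) (Fin 3) ℂ) (x : Fin 3 → ℂ) :
    star x ⬝ᵥ (choiPhi A *ᵥ x) =
      2⁻¹ * (∑ i, (choiWeight x i : ℂ) * A i i - star x ⬝ᵥ (A *ᵥ x)) := by
  simp only [choiPhi, choiWeight, dotProduct, mulVec, Fin.sum_univ_three, Matrix.smul_apply,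
    of_apply, cons_val', cons_val_fin_one, cons_val_zero, cons_val_one, cons_val, Fin.reduceAdd,
    zero_add, smul_eq_mul, Pi.star_apply, RCLike.star_def, Complex.ofReal_add, Complex.ofReal_mul,
    Complex.ofReal_ofNat, Complex.ofReal_pow, ← Complex.conj_mul']
  ring

lemma dotProduct_conjTranspose_mul_self_mulVec_le {ι : Type*} [Fintype ι]
    (B : Matrix ι (Fin 3) ℂ) (x : Fin 3 → ℂ) :
    star x ⬝ᵥ ((Bᴴ * B) *ᵥ x) ≤ ∑ i, (choiWeight x i : ℂ) * (Bᴴ * B) i i := by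
  rw [← mulVec_mulVec, dotProduct_mulVec, vecMul_conjTranspose, star_star]
  simp only [dotProduct, Pi.star_apply, mul_apply, conjTranspose_apply, Complex.star_def,
    Complex.conj_mul', Finset.mul_sum]
  rw [Finset.sum_comm]
  refine Finset.sum_le_sum fun k _ => ?_
  exact_mod_cast norm_dotProduct_sq_le_sum_choiWeight (B k) x

/-- the Choi map `φ` is a positive map. -/
theorem choiPhi_positive (A : Matrix (Fin 3) (Fin 3) ℂ) (hA : A.PosSemidef) :
    (choiPhi A).PosSemidef := by
  obtain ⟨B, rfl⟩ : ∃ B : Matrix (Fin 3) (Fin 3) ℂ, A = Bᴴ * B := by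
    open MatrixOrder in exact CStarAlgebra.nonneg_iff_eq_star_mul_self.mp hA.nonneg
  refine posSemidef_iff_dotProduct_mulVec.mpr ⟨isHermitian_choiPhi hA.isHermitian, fun x => ?_⟩
  rw [dotProduct_choiPhi_mulVec]
  exact mul_nonneg (inv_nonneg.mpr zero_le_two)
    (sub_nonneg.mpr (dotProduct_conjTranspose_mul_self_mulVec_le B x))
end

section
/- The Choi map φ on 3×3 matrices is not completely positive: the operator (φ⊗id_3) applied to the (unnormalized) maximally entangled projector Σ_{i,j} |ii⟩⟨jj| on ℂ^3⊗ℂ^3 has a negative eigenvalue. -/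
open Matrix
open scoped ComplexOrder

/-- `φ ⊗ id`: apply `φ` to the first tensor factor of an operator on `ℂ^3 ⊗ ℂ^3`. -/
noncomputable def phiFst (ρ : Matrix (Fin 3 × Fin 3) (Fin 3 × Fin 3) ℂ) :
    Matrix (Fin 3 × Fin 3) (Fin 3 × Fin 3) ℂ :=
  Matrix.of fun p q => choiPhi (Matrix.of fun i j => ρ (i, p.2) (j, q.2)) p.1 q.1

/-- The unnormalized maximally entangled projector `Σ_{i,j} |ii⟩⟨jj|` on `ℂ^3 ⊗ ℂ^3`. -/
def maxEnt : Matrix (Fin 3 × Fin 3) (Fin 3 × Fin 3) ℂ :=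
  Matrix.of fun p q => if p.1 = p.2 ∧ q.1 = q.2 then 1 else 0

/-!
Testing `(φ ⊗ id) (Σ |ii⟩⟨jj|)` against `Ω = Σ |ii⟩` gives `Σ_{i,j} φ(E_ij)_ij = 3·½ − 6·½ = −3/2`.
So this Hermitian matrix is not positive semidefinite, and one of its eigenvalues is negative.
-/

namespace Matrix.IsHermitian

variable {n 𝕜 : Type*} [Fintype n] [DecidableEq n] [RCLike 𝕜] {A : Matrix n n 𝕜}

lemma exists_eigenvalues_neg_of_re_dotProduct_neg (hA : A.IsHermitian) (x : n → 𝕜)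
    (hx : RCLike.re (star x ⬝ᵥ (A *ᵥ x)) < 0) : ∃ i, hA.eigenvalues i < 0 := by
  by_contra! h
  have hA' : A.PosSemidef := hA.posSemidef_iff_eigenvalues_nonneg.mpr h
  exact (hA'.re_dotProduct_nonneg x).not_gt hx

end Matrix.IsHermitian

def maxEntVec (ι : Type*) [DecidableEq ι] : ι × ι → ℂ := fun p => if p.1 = p.2 then 1 else 0

lemma dotProduct_mulVec_maxEntVec {ι : Type*} [Fintype ι] [DecidableEq ι]
    (M : Matrix (ι × ι) (ι × ι) ℂ) :
    star (maxEntVec ι) ⬝ᵥ (M *ᵥ maxEntVec ι) = ∑ i, ∑ j, M (i, i) (j, j) := by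
  simp [dotProduct, mulVec, maxEntVec, Fintype.sum_prod_type]

lemma choiPhi_conjTranspose (a : Matrix (Fin 3) (Fin 3) ℂ) : (choiPhi a)ᴴ = choiPhi aᴴ := by
  ext i j
  fin_cases i <;> fin_cases j <;> simp [choiPhi]

lemma phiFst_conjTranspose (ρ : Matrix (Fin 3 × Fin 3) (Fin 3 × Fin 3) ℂ) :
    (phiFst ρ)ᴴ = phiFst ρᴴ := by
  ext p q
  rw [conjTranspose_apply, phiFst, of_apply, ← conjTranspose_apply, choiPhi_conjTranspose]
  rfl

lemma maxEnt_isHermitian : maxEnt.IsHermitian := by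
  ext p q
  simp [maxEnt, and_comm]

lemma phiFst_maxEnt_isHermitian : (phiFst maxEnt).IsHermitian := by
  rw [IsHermitian, phiFst_conjTranspose, maxEnt_isHermitian.eq]

lemma phiFst_maxEnt_apply_diag (i j : Fin 3) :
    phiFst maxEnt (i, i) (j, j) = if i = j then 1 / 2 else -1 / 2 := by
  fin_cases i <;> fin_cases j <;> simp [phiFst, choiPhi, maxEnt] <;> norm_num

lemma dotProduct_phiFst_maxEnt_mulVec_maxEntVec :
    star (maxEntVec (Fin 3)) ⬝ᵥ (phiFst maxEnt *ᵥ maxEntVec (Fin 3)) = -3 / 2 := by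
  simp only [dotProduct_mulVec_maxEntVec, phiFst_maxEnt_apply_diag, Fin.sum_univ_three]
  norm_num [Fin.ext_iff]

/-- the Choi map is not completely positive: `(φ ⊗ id)` applied to the
maximally entangled projector has a negative eigenvalue. -/
theorem choiPhi_not_completely_positive :
    ∃ (h : (phiFst maxEnt).IsHermitian) (i : Fin 3 × Fin 3), h.eigenvalues i < 0 :=
  ⟨phiFst_maxEnt_isHermitian,
    phiFst_maxEnt_isHermitian.exists_eigenvalues_neg_of_re_dotProduct_neg (maxEntVec (Fin 3))
      (by rw [dotProduct_phiFst_maxEnt_mulVec_maxEntVec]; norm_num)⟩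
end
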